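/- In the field ℚ(q), for all nonnegative integers n, i, k: [n,i]·[n,k] = Σ_{j=0}^{i+k} q^{(j-i)(j-k)}·Mq(j;i,k)·[n,j]. -/

import Mathlib

/-- The $q$-factorial `(q)_n = (1-q)(1-q²)⋯(1-qⁿ)` in `ℚ(q) = RatFunc ℚ`. -/
noncomputable def qfac (n : ℕ) : RatFunc ℚ :=
  ∏ m ∈ Finset.range n, (1 - (RatFunc.X : RatFunc ℚ) ^ (m + 1))

/-- The Gaussian binomial coefficient `[n, k]` in `ℚ(q)`. -/
noncomputable def qbinom (n k : ℕ) : RatFunc ℚ :=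
  if k ≤ n then qfac n / (qfac k * qfac (n - k)) else 0

/-- The $q$-multinomial coefficient `Mq(j; i, k)` in `ℚ(q)`: it equals
`(q)_j/((q)_{j-i}(q)_{j-k}(q)_{i+k-j})` when `max i k ≤ j ≤ i + k`, and `0`
otherwise. -/
noncomputable def qmulti (j i k : ℕ) : RatFunc ℚ :=
  if i ≤ j ∧ k ≤ j ∧ j ≤ i + k then
    qfac j / (qfac (j - i) * qfac (j - k) * qfac (i + k - j))
  else 0

/-!
The q-Vandermonde identity `[i + m, k] = ∑_{r + s = k} q^{(i-r)s} [i, r] [m, s]` with `m = n - i`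
expresses `[n, k]`; multiplying by `[n, i]` and using `[n, i] [n - i, s] = [n, i + s] [i + s, i]`
and `[i + s, i] [i, r] = Mq(i + s; i, k)` gives the claim after the substitution `j = i + s`,
for which `(j - i)(j - k) = s (i - r)`. The terms with `j < i` vanish because `Mq(j; i, k) = 0`.
-/

open Finset

local notation "q" => (RatFunc.X : RatFunc ℚ)

theorem one_sub_X_pow_ne_zero {m : ℕ} (hm : m ≠ 0) : 1 - q ^ m ≠ 0 := by
  rw [← RatFunc.algebraMap_X, ← map_pow, ← map_one (algebraMap (Polynomial ℚ) _), ← map_sub,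
    Ne, map_eq_zero_iff _ (RatFunc.algebraMap_injective ℚ), sub_eq_zero]
  intro h
  exact hm (by simpa using congrArg Polynomial.natDegree h.symm)

theorem qfac_ne_zero (n : ℕ) : qfac n ≠ 0 :=
  prod_ne_zero_iff.2 fun m _ => one_sub_X_pow_ne_zero m.succ_ne_zero

theorem qfac_zero : qfac 0 = 1 := prod_range_zero _

theorem qfac_succ (n : ℕ) : qfac (n + 1) = qfac n * (1 - q ^ (n + 1)) :=
  prod_range_succ _ _

theorem qbinom_of_lt {n k : ℕ} (h : n < k) : qbinom n k = 0 :=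
  if_neg h.not_ge

theorem qbinom_of_add_eq {a b n : ℕ} (h : a + b = n) :
    qbinom n a = qfac n / (qfac a * qfac b) := by
  rw [qbinom, if_pos (by omega), show n - a = b by omega]

theorem qbinom_zero_right (n : ℕ) : qbinom n 0 = 1 := by
  rw [qbinom_of_add_eq (zero_add n), qfac_zero, one_mul, div_self (qfac_ne_zero n)]

theorem qbinom_self (n : ℕ) : qbinom n n = 1 := by
  rw [qbinom_of_add_eq (add_zero n), qfac_zero, mul_one, div_self (qfac_ne_zero n)]

-- The integer exponent avoids truncated subtraction; for `n < k` the term vanishes anyway.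
theorem qbinom_succ_succ (n k : ℕ) :
    qbinom (n + 1) (k + 1) = qbinom n (k + 1) + q ^ ((n : ℤ) - k) * qbinom n k := by
  rcases lt_trichotomy n k with h | rfl | h
  · rw [qbinom_of_lt (by omega), qbinom_of_lt (by omega), qbinom_of_lt h, mul_zero, add_zero]
  · simp [qbinom_self, qbinom_of_lt]
  obtain ⟨t, rfl⟩ := Nat.exists_eq_add_of_lt h
  rw [qbinom_of_add_eq (b := t + 1) (by omega), qbinom_of_add_eq (b := t) (by omega),
    qbinom_of_add_eq (b := t + 1) (by omega),
    show ((k + t + 1 : ℕ) : ℤ) - k = (t + 1 : ℕ) by omega, zpow_natCast,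
    qfac_succ (k + t + 1), qfac_succ k, qfac_succ t]
  have := qfac_ne_zero k
  have := qfac_ne_zero t
  have := one_sub_X_pow_ne_zero k.succ_ne_zero
  have := one_sub_X_pow_ne_zero t.succ_ne_zero
  field_simp
  ring

theorem qbinom_add_eq_sum_antidiagonal (a b k : ℕ) :
    qbinom (a + b) k =
      ∑ p ∈ antidiagonal k, q ^ (((a : ℤ) - p.1) * p.2) * qbinom a p.1 * qbinom b p.2 := by
  induction b generalizing k with
  | zero =>
    rw [add_zero, sum_eq_single (k, 0)]
    · simp [qbinom_zero_right]
    · rintro ⟨r, s⟩ hp hne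
      rw [HasAntidiagonal.mem_antidiagonal] at hp
      have hs : 0 < s := Nat.pos_of_ne_zero fun hs => hne (by simp_all)
      rw [qbinom_of_lt hs, mul_zero]
    · simp
  | succ b ih =>
    cases k with
    | zero => simp [qbinom_zero_right]
    | succ k =>
      have hterm : ∀ p ∈ antidiagonal k,
          q ^ (((a : ℤ) - p.1) * (p.2 + 1 : ℕ)) * qbinom a p.1 * qbinom (b + 1) (p.2 + 1) =
            q ^ (((a : ℤ) - p.1) * (p.2 + 1 : ℕ)) * qbinom a p.1 * qbinom b (p.2 + 1) +
              q ^ ((a + b : ℕ) - (k : ℤ)) *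
                (q ^ (((a : ℤ) - p.1) * p.2) * qbinom a p.1 * qbinom b p.2) := by
        rintro ⟨r, s⟩ hp
        rw [HasAntidiagonal.mem_antidiagonal] at hp
        have hexp : ((a : ℤ) - r) * (s + 1 : ℕ) + (b - s) =
            ((a + b : ℕ) - (k : ℤ)) + (a - r) * s := by
          rw [← hp]; push_cast; ring
        have hq : q ≠ 0 := RatFunc.X_ne_zero
        have hpow := congrArg (q ^ ·) hexp
        simp only [zpow_add₀ hq] at hpow
        dsimp only
        rw [qbinom_succ_succ]
        linear_combination (qbinom a r * qbinom b s) * hpow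
      rw [← add_assoc, qbinom_succ_succ, ih, ih, Nat.sum_antidiagonal_succ',
        Nat.sum_antidiagonal_succ', sum_congr rfl hterm, sum_add_distrib, ← mul_sum]
      simp only [qbinom_zero_right]
      ring

theorem qbinom_mul_qbinom_add (n i s : ℕ) :
    qbinom n (i + s) * qbinom (i + s) i = qbinom n i * qbinom (n - i) s := by
  by_cases h : i + s ≤ n
  · obtain ⟨t, rfl⟩ := Nat.exists_eq_add_of_le h
    rw [qbinom_of_add_eq rfl, qbinom_of_add_eq rfl, qbinom_of_add_eq (b := s + t) (by omega),
      show i + s + t - i = s + t by omega, qbinom_of_add_eq rfl]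
    have := qfac_ne_zero (i + s)
    have := qfac_ne_zero (s + t)
    field_simp
  · rw [qbinom_of_lt (by omega), zero_mul]
    rcases le_or_gt i n with hi | hi
    · rw [qbinom_of_lt (show n - i < s by omega), mul_zero]
    · rw [qbinom_of_lt hi, zero_mul]

theorem qmulti_add_eq {i r s k : ℕ} (h : r + s = k) :
    qmulti (i + s) i k = qbinom (i + s) i * qbinom i r := by
  by_cases hr : r ≤ i
  · obtain ⟨u, rfl⟩ := Nat.exists_eq_add_of_le hr
    rw [qmulti, if_pos (by omega), show r + u + s - (r + u) = s by omega,
      show r + u + s - k = u by omega, show r + u + k - (r + u + s) = r by omega,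
      qbinom_of_add_eq rfl, qbinom_of_add_eq rfl]
    have := qfac_ne_zero (r + u)
    field_simp
  · rw [qmulti, if_neg (by omega), qbinom_of_lt (show i < r by omega), mul_zero]

/-- Result 3.2. -/
theorem stmt_12 (n i k : ℕ) :
    qbinom n i * qbinom n k =
      ∑ j ∈ Finset.range (i + k + 1),
        (RatFunc.X : RatFunc ℚ) ^ (((j : ℤ) - i) * ((j : ℤ) - k)) *
          qmulti j i k * qbinom n j := by
  have hsplit : qbinom n i * qbinom n k = qbinom n i * qbinom (i + (n - i)) k := by
    rcases le_or_gt i n with hi | hi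
    · rw [Nat.add_sub_cancel' hi]
    · rw [qbinom_of_lt hi, zero_mul, zero_mul]
  have hlow : ∑ j ∈ range i, q ^ (((j : ℤ) - i) * ((j : ℤ) - k)) * qmulti j i k * qbinom n j = 0 :=
    sum_eq_zero fun j hj => by
      rw [qmulti, if_neg (by rw [mem_range] at hj; omega), mul_zero, zero_mul]
  rw [hsplit, qbinom_add_eq_sum_antidiagonal, mul_sum, ← Nat.sum_antidiagonal_swap,
    Nat.sum_antidiagonal_eq_sum_range_succ_mk, add_assoc, sum_range_add, hlow, zero_add]
  refine sum_congr rfl fun s hs => ?_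
  have hsk : s ≤ k := Nat.lt_succ_iff.mp (mem_range.mp hs)
  have hexp :
      ((i : ℤ) - (k - s : ℕ)) * s = ((i + s : ℕ) - (i : ℤ)) * ((i + s : ℕ) - (k : ℤ)) := by
    push_cast [Nat.cast_sub hsk]
    ring
  dsimp only [Prod.swap]
  rw [qmulti_add_eq (Nat.sub_add_cancel hsk), hexp]
  linear_combination
    (q ^ (((i + s : ℕ) - (i : ℤ)) * ((i + s : ℕ) - (k : ℤ))) * qbinom i (k - s)) *
      (qbinom_mul_qbinom_add n i s).symm
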